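/- arXiv:quant-ph/0608142 — 5 statements merged into one kernel-verified Lean document; each statement's English description precedes it below -/
import Mathlib

section
/- For all real p with 1/2 < p < 1, writing γ = p - 1/2, we have 1 - H(p) ≤ 4γ², where H(p) = -p·log₂(p) - (1-p)·log₂(1-p) is the binary entropy function. -/
/-!
Write `p = (1 + s) / 2`. In nats, the entropy deficit `log 2 - h((1 + s) / 2)` is the power
series `∑ s ^ (2k+2) / ((2k+1)(2k+2))`, whose coefficients are nonnegative, so its quotient by
`s ^ 2` is nondecreasing in `|s|`. As `|s| → 1` the deficit tends to `log 2`, hence it is at most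
`s ^ 2 log 2 = 4 (p - 1/2) ^ 2 log 2`; dividing by `log 2` converts to bits.
-/

/-- Binary entropy function. -/
noncomputable def binEntropy (p : ℝ) : ℝ :=
  -p * Real.logb 2 p - (1 - p) * Real.logb 2 (1 - p)

theorem binEntropy_eq_binEntropy_div_log_two (p : ℝ) :
    binEntropy p = Real.binEntropy p / Real.log 2 := by
  simp only [binEntropy, Real.binEntropy, Real.logb, Real.log_inv]
  ring

theorem Real.log_two_sub_binEntropy_one_add_div_two {s : ℝ} (hs : |s| < 1) :
    Real.log 2 - Real.binEntropy ((1 + s) / 2) =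
      (s * (Real.log (1 + s) - Real.log (1 - s)) + Real.log (1 - s ^ 2)) / 2 := by
  obtain ⟨hs₁, hs₂⟩ := abs_lt.mp hs
  have hplus : 0 < 1 + s := by linarith
  have hminus : 0 < 1 - s := by linarith
  have hsq : 1 - s ^ 2 = (1 + s) * (1 - s) := by ring
  rw [Real.binEntropy, show 1 - (1 + s) / 2 = (1 - s) / 2 by ring, Real.log_inv, Real.log_inv,
    Real.log_div hplus.ne' two_ne_zero, Real.log_div hminus.ne' two_ne_zero, hsq,
    Real.log_mul hplus.ne' hminus.ne']
  ring

theorem Real.hasSum_log_two_sub_binEntropy {s : ℝ} (hs : |s| < 1) :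
    HasSum (fun k : ℕ => s ^ (2 * k + 2) / ((2 * k + 1) * (2 * k + 2)))
      (Real.log 2 - Real.binEntropy ((1 + s) / 2)) := by
  have hsq : |s ^ 2| < 1 := by simpa [abs_pow] using pow_lt_one₀ (abs_nonneg s) hs two_ne_zero
  have hodd := (Real.hasSum_log_sub_log_of_abs_lt_one hs).mul_left (s / 2)
  have hlog := (Real.hasSum_pow_div_log_of_abs_lt_one hsq).div_const 2
  have hsum : s / 2 * (Real.log (1 + s) - Real.log (1 - s)) - -Real.log (1 - s ^ 2) / 2 =
      Real.log 2 - Real.binEntropy ((1 + s) / 2) := by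
    rw [Real.log_two_sub_binEntropy_one_add_div_two hs]
    ring
  refine hsum ▸ (hodd.sub hlog).congr_fun fun k => ?_
  have : (0 : ℝ) < 2 * k + 1 := by positivity
  field_simp
  ring

theorem Real.sq_mul_log_two_sub_binEntropy_le {s t : ℝ} (hst : |s| ≤ |t|) (ht : |t| < 1) :
    t ^ 2 * (Real.log 2 - Real.binEntropy ((1 + s) / 2)) ≤
      s ^ 2 * (Real.log 2 - Real.binEntropy ((1 + t) / 2)) := by
  have hsq : s ^ 2 ≤ t ^ 2 := sq_le_sq.mpr hst
  refine hasSum_le (fun k => ?_) ((hasSum_log_two_sub_binEntropy (hst.trans_lt ht)).mul_left _)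
    ((hasSum_log_two_sub_binEntropy ht).mul_left _)
  have hpow : (s ^ 2) ^ k ≤ (t ^ 2) ^ k := pow_le_pow_left₀ (sq_nonneg s) hsq k
  calc t ^ 2 * (s ^ (2 * k + 2) / ((2 * k + 1) * (2 * k + 2)))
      = s ^ 2 * t ^ 2 * (s ^ 2) ^ k / ((2 * k + 1) * (2 * k + 2)) := by ring
    _ ≤ s ^ 2 * t ^ 2 * (t ^ 2) ^ k / ((2 * k + 1) * (2 * k + 2)) := by gcongr
    _ = s ^ 2 * (t ^ (2 * k + 2) / ((2 * k + 1) * (2 * k + 2))) := by ring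

theorem Real.log_two_sub_binEntropy_le {s : ℝ} (hs : |s| < 1) :
    Real.log 2 - Real.binEntropy ((1 + s) / 2) ≤ Real.log 2 * s ^ 2 := by
  have hone : (1 : ℝ) ∈ closure (Set.Ico |s| 1) := by
    rw [closure_Ico hs.ne]
    exact ⟨hs.le, le_rfl⟩
  have key := le_on_closure (fun t (ht : t ∈ Set.Ico |s| 1) =>
      have ht₀ : 0 ≤ t := (abs_nonneg s).trans ht.1
      sq_mul_log_two_sub_binEntropy_le (ht.1.trans_eq (abs_of_nonneg ht₀).symm)
        ((abs_of_nonneg ht₀).trans_lt ht.2))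
    (by fun_prop) (by fun_prop) hone
  simpa [mul_comm] using key

theorem one_sub_binEntropy_le (p : ℝ) (hp : 1/2 < p) (hp1 : p < 1) :
    1 - binEntropy p ≤ 4 * (p - 1/2) ^ 2 := by
  have hs : |2 * p - 1| < 1 := abs_lt.mpr ⟨by linarith, by linarith⟩
  have hbound := Real.log_two_sub_binEntropy_le hs
  rw [show (1 + (2 * p - 1)) / 2 = p by ring] at hbound
  have hlog2 : 0 < Real.log 2 := Real.log_pos one_lt_two
  calc 1 - binEntropy p = (Real.log 2 - Real.binEntropy p) / Real.log 2 := by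
        rw [binEntropy_eq_binEntropy_div_log_two]; field_simp
    _ ≤ (2 * p - 1) ^ 2 := by rwa [div_le_iff₀' hlog2]
    _ = 4 * (p - 1/2) ^ 2 := by ring
end

section
/- Let E₁,…,E_m be Hermitian matrices on ℂ^d with eigenvalues in [0,1] (two-outcome POVM elements), and let ρ be a density matrix with Tr(E_i ρ) ≥ 1 - ε for all i. If the measurements {E_i, I - E_i} are applied in sequence to initial state ρ, the probability that at least one measurement rejects (i.e., the 'I - E_i' outcome occurs for some i) is at most m·√ε. -/
open Matrix
open scoped ComplexOrder

/-- A density matrix on `ℂ^d`. -/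
def IsDensityMatrix {d : ℕ} (ρ : Matrix (Fin d) (Fin d) ℂ) : Prop :=
  ρ.PosSemidef ∧ ρ.trace = 1

/-- A two-outcome measurement: Hermitian with eigenvalues in `[0,1]`,
i.e. `0 ≤ E ≤ I` in the PSD order. -/
def IsMeasurementMatrix {d : ℕ} (E : Matrix (Fin d) (Fin d) ℂ) : Prop :=
  E.PosSemidef ∧ (1 - E).PosSemidef

/-!
Purify the state: write `ρ = T Tᴴ` and view `T` as a unit vector `ψ` of `ℂ^(d×d)` with the
Frobenius inner product. Then `Sᵢ` acts by left multiplication, a positive contraction `Pᵢ`, and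
`Tr σᵤ = ‖xᵤ‖²` for `x₀ = ψ`, `xᵤ₊₁ = Pᵤ xᵤ`. Because `Pᵢ² ≤ Pᵢ`, acceptance with probability
`≥ 1 - ε` gives `‖ψ - Pᵢ ψ‖ ≤ √ε` and `re ⟪ψ - Pᵢ ψ, ψ⟫ ≤ ε`. Telescoping, `‖ψ - xᵤ‖ ≤ u √ε`, and
then `1 - re ⟪ψ, xᵤ⟫ ≤ ε u (u + 1) / 2`. Since `‖xₘ‖ ≥ re ⟪ψ, xₘ⟫`, this quadratic bound yields
`1 - ‖xₘ‖² ≤ m √ε` when `m ≥ 2` and `m √ε ≤ 1`; for `m = 1` one has directly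
`1 - ‖P₀ ψ‖² ≤ ε ≤ √ε`.
-/

open RCLike WithLp
open scoped InnerProductSpace Kronecker

/-- For `n ≥ 2` we have `n (n + 1) / 2 ≤ 3 n² / 4`, and `2 y - y² ≤ x` whenever
`y ≤ 3 x² / 4` and `x ≤ 1`. -/
lemma one_sub_sq_le_of_one_sub_le {n s t : ℝ} (hn : 2 ≤ n) (hs : 0 ≤ s) (hns : n * s ≤ 1)
    (h : 1 - t ≤ s ^ 2 * (n * (n + 1) / 2)) : 1 - t ^ 2 ≤ n * s := by
  set x := n * s
  have hx : 0 ≤ x := by positivity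
  have hy : 1 - t ≤ 3 / 4 * x ^ 2 := by
    nlinarith [mul_nonneg (mul_nonneg (sq_nonneg s) (by linarith : (0 : ℝ) ≤ n))
      (by linarith : (0 : ℝ) ≤ n - 2)]
  have hcubic : 0 ≤ 9 * x ^ 3 - 24 * x + 16 := by
    nlinarith [mul_nonneg hx (sq_nonneg (3 * x - 2)),
      mul_nonneg (by linarith : (0 : ℝ) ≤ 4 - 3 * x) (by linarith : (0 : ℝ) ≤ 1 - x)]
  nlinarith [mul_nonneg (by linarith : (0 : ℝ) ≤ 3 / 4 * x ^ 2 - (1 - t))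
    (by nlinarith : (0 : ℝ) ≤ 2 - 3 / 4 * x ^ 2 - (1 - t)), mul_nonneg hx hcubic]

variable {𝕜 H : Type*} [RCLike 𝕜] [NormedAddCommGroup H] [InnerProductSpace 𝕜 H]

def LinearMap.IsPositiveContraction (P : H →ₗ[𝕜] H) : Prop :=
  P.IsPositive ∧ ∀ y, ‖P y‖ ≤ ‖y‖

namespace LinearMap.IsPositiveContraction

variable {P : H →ₗ[𝕜] H}

lemma re_inner_map_self_le_norm_sq (hP : P.IsPositiveContraction) (y : H) :
    re ⟪P y, y⟫_𝕜 ≤ ‖y‖ ^ 2 :=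
  (re_inner_le_norm _ _).trans <| by nlinarith [hP.2 y, norm_nonneg y]

/-- `P - P² = (1 - P) P (1 - P) + P (1 - P) P` is a sum of two positive operators. -/
lemma norm_sq_le_re_inner_map_self (hP : P.IsPositiveContraction) (y : H) :
    ‖P y‖ ^ 2 ≤ re ⟪P y, y⟫_𝕜 := by
  have h₁ := hP.1.re_inner_nonneg_left (y - P y)
  have h₂ := hP.re_inner_map_self_le_norm_sq (P y)
  have hsymm : ⟪P (P y), y⟫_𝕜 = ⟪P y, P y⟫_𝕜 := hP.1.isSymmetric _ _
  simp only [map_sub, inner_sub_left, inner_sub_right, hsymm] at h₁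
  linarith [norm_sq_eq_re_inner (𝕜 := 𝕜) (P y)]

lemma norm_sub_map_sq_le (hP : P.IsPositiveContraction) (y : H) :
    ‖y - P y‖ ^ 2 ≤ ‖y‖ ^ 2 - ‖P y‖ ^ 2 := by
  rw [norm_sub_sq (𝕜 := 𝕜), inner_re_symm]
  linarith [hP.norm_sq_le_re_inner_map_self y]

lemma re_inner_sub_map_le (hP : P.IsPositiveContraction) (y : H) :
    re ⟪y - P y, y⟫_𝕜 ≤ ‖y‖ ^ 2 - ‖P y‖ ^ 2 := by
  rw [inner_sub_left, map_sub, ← norm_sq_eq_re_inner (𝕜 := 𝕜)]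
  linarith [hP.norm_sq_le_re_inner_map_self y]

variable {ψ : H} {ε : ℝ}

lemma nonneg_of_sq_norm_sub_le (hP : P.IsPositiveContraction)
    (hrej : ‖ψ‖ ^ 2 - ‖P ψ‖ ^ 2 ≤ ε) : 0 ≤ ε := by
  nlinarith [hP.2 ψ, norm_nonneg (P ψ)]

lemma norm_sub_map_le_sqrt (hP : P.IsPositiveContraction) (hrej : ‖ψ‖ ^ 2 - ‖P ψ‖ ^ 2 ≤ ε) :
    ‖ψ - P ψ‖ ≤ √ε := by
  simpa using Real.abs_le_sqrt ((hP.norm_sub_map_sq_le ψ).trans hrej)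

lemma re_inner_sub_re_inner_map_le (hP : P.IsPositiveContraction)
    (hrej : ‖ψ‖ ^ 2 - ‖P ψ‖ ^ 2 ≤ ε) (y : H) :
    re ⟪ψ, y⟫_𝕜 - re ⟪ψ, P y⟫_𝕜 ≤ ε + √ε * ‖y - ψ‖ := by
  have hsplit : re ⟪ψ, y⟫_𝕜 - re ⟪ψ, P y⟫_𝕜 =
      re ⟪ψ - P ψ, ψ⟫_𝕜 + re ⟪ψ - P ψ, y - ψ⟫_𝕜 := by
    rw [← hP.1.isSymmetric, ← map_sub, ← inner_sub_left, ← map_add, ← inner_add_right,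
      add_sub_cancel]
  rw [hsplit]
  gcongr
  · exact (hP.re_inner_sub_map_le ψ).trans hrej
  · exact (re_inner_le_norm _ _).trans <|
      mul_le_mul_of_nonneg_right (hP.norm_sub_map_le_sqrt hrej) (norm_nonneg _)

end LinearMap.IsPositiveContraction

section SequentialContraction

variable {n : ℕ} {P : Fin n → H →ₗ[𝕜] H} {x : Fin (n + 1) → H} {ε : ℝ}

lemma norm_sub_le_of_succ_eq_map (hP : ∀ i, (P i).IsPositiveContraction)
    (hx : ∀ i, x i.succ = P i (x i.castSucc)) (hrej : ∀ i, ‖x 0‖ ^ 2 - ‖P i (x 0)‖ ^ 2 ≤ ε)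
    (i : Fin (n + 1)) : ‖x 0 - x i‖ ≤ i * √ε := by
  induction i using Fin.induction with
  | zero => simp
  | succ i ih =>
    have hsplit : x 0 - x i.succ = (x 0 - P i (x 0)) + P i (x 0 - x i.castSucc) := by
      rw [hx, map_sub]
      abel
    calc ‖x 0 - x i.succ‖ ≤ √ε + ‖x 0 - x i.castSucc‖ := by
          rw [hsplit]
          exact (norm_add_le _ _).trans <|
            add_le_add ((hP i).norm_sub_map_le_sqrt (hrej i)) ((hP i).2 _)
      _ ≤ i.succ * √ε := by
          rw [Fin.val_castSucc] at ih
          rw [Fin.val_succ, Nat.cast_succ]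
          linarith

lemma sq_norm_sub_re_inner_le_of_succ_eq_map (hP : ∀ i, (P i).IsPositiveContraction)
    (hx : ∀ i, x i.succ = P i (x i.castSucc)) (hrej : ∀ i, ‖x 0‖ ^ 2 - ‖P i (x 0)‖ ^ 2 ≤ ε)
    (i : Fin (n + 1)) : ‖x 0‖ ^ 2 - re ⟪x 0, x i⟫_𝕜 ≤ ε * (i * (i + 1) / 2) := by
  induction i using Fin.induction with
  | zero => simp
  | succ i ih =>
    have hε := (hP i).nonneg_of_sq_norm_sub_le (hrej i)
    have hstep := (hP i).re_inner_sub_re_inner_map_le (hrej i) (x i.castSucc)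
    have hdist := norm_sub_le_of_succ_eq_map hP hx hrej i.castSucc
    rw [norm_sub_rev] at hdist
    rw [hx]
    simp only [Fin.val_succ, Fin.val_castSucc] at ih hdist ⊢
    push_cast
    nlinarith [Real.sq_sqrt hε, Real.sqrt_nonneg ε]

theorem one_sub_sq_norm_last_le (hP : ∀ i, (P i).IsPositiveContraction)
    (hx : ∀ i, x i.succ = P i (x i.castSucc)) (hx0 : ‖x 0‖ = 1)
    (hrej : ∀ i, ‖x 0‖ ^ 2 - ‖P i (x 0)‖ ^ 2 ≤ ε) :
    1 - ‖x (Fin.last n)‖ ^ 2 ≤ n * √ε := by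
  rcases le_or_gt 1 (n * √ε) with h | h
  · nlinarith [sq_nonneg ‖x (Fin.last n)‖]
  obtain rfl | rfl | hn : n = 0 ∨ n = 1 ∨ 2 ≤ n := by omega
  · simp [hx0]
  · have hε := (hP 0).nonneg_of_sq_norm_sub_le (hrej 0)
    have h1 : 1 - ‖x (Fin.last 1)‖ ^ 2 ≤ ε := by
      rw [show Fin.last 1 = (0 : Fin 1).succ from rfl, hx]
      simpa [hx0] using hrej 0
    rw [Nat.cast_one, one_mul] at h ⊢
    nlinarith [Real.sq_sqrt hε, Real.sqrt_nonneg ε]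
  · have hε := (hP ⟨0, by omega⟩).nonneg_of_sq_norm_sub_le (hrej _)
    have hc := sq_norm_sub_re_inner_le_of_succ_eq_map hP hx hrej (Fin.last n)
    have hct : re ⟪x 0, x (Fin.last n)⟫_𝕜 ≤ ‖x (Fin.last n)‖ := by
      simpa [hx0] using re_inner_le_norm (𝕜 := 𝕜) (x 0) (x (Fin.last n))
    rw [hx0, Fin.val_last, ← Real.sq_sqrt hε] at hc
    exact one_sub_sq_le_of_one_sub_le (by exact_mod_cast hn) (Real.sqrt_nonneg ε) h.le
      (by linarith)

end SequentialContraction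

namespace Matrix

lemma one_sub_one_kronecker {m n : Type*} [DecidableEq m] [DecidableEq n] (A : Matrix m m 𝕜) :
    1 - (1 : Matrix n n 𝕜) ⊗ₖ A = 1 ⊗ₖ (1 - A) := by
  ext ⟨i, j⟩ ⟨k, l⟩
  simp only [sub_apply, kroneckerMap_apply, one_apply, Prod.mk.injEq]
  split_ifs <;> simp_all

variable {m n : Type*} [Fintype m] [Fintype n]

lemma inner_toLp_vec (A B : Matrix m n 𝕜) :
    ⟪toLp 2 A.vec, toLp 2 B.vec⟫_𝕜 = (Aᴴ * B).trace := by
  rw [EuclideanSpace.inner_toLp_toLp, dotProduct_comm, star_vec_dotProduct_vec]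

lemma norm_toLp_vec_sq (A : Matrix m n 𝕜) : ‖toLp 2 A.vec‖ ^ 2 = re (Aᴴ * A).trace := by
  rw [norm_sq_eq_re_inner (𝕜 := 𝕜), inner_toLp_vec]

lemma norm_toLp_vec_conjTranspose_mul_sq (Y : Matrix m m 𝕜) (T : Matrix m n 𝕜) :
    ‖toLp 2 (Yᴴ * T).vec‖ ^ 2 = re (Yᴴ * (T * Tᴴ) * Y).trace := by
  rw [norm_toLp_vec_sq, trace_mul_comm]
  simp only [conjTranspose_mul, conjTranspose_conjTranspose, Matrix.mul_assoc]

lemma toEuclideanLin_one_kronecker_toLp_vec [DecidableEq m] [DecidableEq n]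
    (A : Matrix m m 𝕜) (X : Matrix m n 𝕜) :
    toEuclideanLin (1 ⊗ₖ A) (toLp 2 X.vec) = toLp 2 (A * X).vec := by
  rw [toLpLin_toLp, toLin'_apply, vec_mul_eq_mulVec]

lemma PosSemidef.isPositiveContraction_toEuclideanLin [DecidableEq n] {A : Matrix n n 𝕜}
    (hA : A.PosSemidef) (hA1 : (1 - A * A).PosSemidef) :
    (toEuclideanLin A).IsPositiveContraction := by
  have hP := isPositive_toEuclideanLin_iff.mpr hA
  refine ⟨hP, fun y => ?_⟩
  have h := (isPositive_toEuclideanLin_iff.mpr hA1).re_inner_nonneg_left y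
  rw [map_sub, toLpLin_one, toLpLin_mul, LinearMap.sub_apply, LinearMap.comp_apply,
    LinearMap.id_apply, inner_sub_left, hP.isSymmetric, map_sub,
    ← norm_sq_eq_re_inner (𝕜 := 𝕜), ← norm_sq_eq_re_inner (𝕜 := 𝕜), sub_nonneg] at h
  exact (pow_le_pow_iff_left₀ (norm_nonneg _) (norm_nonneg _) two_ne_zero).mp h

lemma PosSemidef.isPositiveContraction_toEuclideanLin_one_kronecker [DecidableEq m]
    [DecidableEq n] {A : Matrix m m 𝕜} (hA : A.PosSemidef) (hA1 : (1 - A * A).PosSemidef) :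
    (toEuclideanLin ((1 : Matrix n n 𝕜) ⊗ₖ A)).IsPositiveContraction := by
  refine (PosSemidef.one.kronecker hA).isPositiveContraction_toEuclideanLin ?_
  rw [← mul_kronecker_mul, one_mul, one_sub_one_kronecker]
  exact PosSemidef.one.kronecker hA1

open scoped MatrixOrder in
lemma PosSemidef.exists_eq_mul_conjTranspose [DecidableEq n] {A : Matrix n n 𝕜}
    (hA : A.PosSemidef) : ∃ T : Matrix n n 𝕜, A = T * Tᴴ := by
  obtain ⟨B, rfl⟩ := CStarAlgebra.nonneg_iff_eq_star_mul_self.mp hA.nonneg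
  exact ⟨Bᴴ, by rw [conjTranspose_conjTranspose, star_eq_conjTranspose]⟩

lemma eq_conjTranspose_partialProd_mul_mul_partialProd [DecidableEq n] {k : ℕ}
    {S : Fin k → Matrix n n 𝕜} (hS : ∀ i, (S i)ᴴ = S i) {σ : ℕ → Matrix n n 𝕜}
    (hσ : ∀ u : Fin k, σ (u.1 + 1) = S u * σ u.1 * S u) (i : Fin (k + 1)) :
    σ i = (Fin.partialProd S i)ᴴ * σ 0 * Fin.partialProd S i := by
  induction i using Fin.induction with
  | zero => simp
  | succ i ih =>
    rw [Fin.val_castSucc] at ih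
    rw [Fin.val_succ, hσ, ih, Fin.partialProd_succ, conjTranspose_mul, hS]
    simp only [Matrix.mul_assoc]

end Matrix

theorem quantum_union_bound_general {d m : ℕ} (ε : ℝ)
    (ρ : Matrix (Fin d) (Fin d) ℂ) (hρ : IsDensityMatrix ρ)
    (E : Fin m → Matrix (Fin d) (Fin d) ℂ)
    (hE : ∀ i, IsMeasurementMatrix (E i))
    (hacc : ∀ i, 1 - ε ≤ ((E i * ρ).trace).re)
    (S : Fin m → Matrix (Fin d) (Fin d) ℂ)
    (hS : ∀ i, (S i).PosSemidef ∧ S i * S i = E i)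
    (σ : ℕ → Matrix (Fin d) (Fin d) ℂ)
    (hσ0 : σ 0 = ρ)
    (hσ : ∀ u : Fin m, σ (u.1 + 1) = S u * σ u.1 * S u) :
    1 - ((σ m).trace).re ≤ m * Real.sqrt ε := by
  obtain ⟨T, rfl⟩ := hρ.1.exists_eq_mul_conjTranspose
  have hSh : ∀ i, (S i)ᴴ = S i := fun i => (hS i).1.1
  set x : Fin (m + 1) → EuclideanSpace ℂ (Fin d × Fin d) :=
    fun i => toLp 2 ((Fin.partialProd S i)ᴴ * T).vec
  have hP : ∀ i, (toEuclideanLin ((1 : Matrix (Fin d) (Fin d) ℂ) ⊗ₖ S i)).IsPositiveContraction :=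
    fun i => (hS i).1.isPositiveContraction_toEuclideanLin_one_kronecker ((hS i).2 ▸ (hE i).2)
  have hx : ∀ i, x i.succ = toEuclideanLin (1 ⊗ₖ S i) (x i.castSucc) := fun i => by
    simp only [x, toEuclideanLin_one_kronecker_toLp_vec, Fin.partialProd_succ, conjTranspose_mul,
      hSh, Matrix.mul_assoc]
  have hnorm : ∀ i, ‖x i‖ ^ 2 = ((σ i).trace).re := fun i => by
    rw [eq_conjTranspose_partialProd_mul_mul_partialProd hSh hσ, hσ0,
      norm_toLp_vec_conjTranspose_mul_sq, RCLike.re_to_complex]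
  have hx0 : ‖x 0‖ = 1 := by
    rw [← pow_eq_one_iff_of_nonneg (norm_nonneg _) two_ne_zero, hnorm, Fin.val_zero, hσ0, hρ.2,
      Complex.one_re]
  have hrej : ∀ i, ‖x 0‖ ^ 2 - ‖toEuclideanLin (1 ⊗ₖ S i) (x 0)‖ ^ 2 ≤ ε := fun i => by
    rw [hx0, one_pow]
    simp only [x, Fin.partialProd_zero, conjTranspose_one, Matrix.one_mul]
    rw [toEuclideanLin_one_kronecker_toLp_vec, ← hSh, norm_toLp_vec_conjTranspose_mul_sq,
      hSh, trace_mul_comm, ← Matrix.mul_assoc, (hS i).2, RCLike.re_to_complex]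
    linarith [hacc i]
  simpa [hnorm] using one_sub_sq_norm_last_le hP hx hx0 hrej

/-- Quantum union bound: if `Tr(Eᵢ ρ) ≥ 1 - ε` for all `i`, and the measurements
`{Eᵢ, I - Eᵢ}` are applied in sequence (with `Sᵢ = √Eᵢ`, the unnormalized
post-measurement state after the `u`-th acceptance being `σ (u+1) = Sᵤ σ u Sᵤ`),
then the probability that at least one measurement rejects, namely
`1 - Tr(σ m)`, is at most `m·√ε`. -/
theorem quantum_union_bound {d m : ℕ} (ε : ℝ) (hε : 0 ≤ ε)
    (ρ : Matrix (Fin d) (Fin d) ℂ) (hρ : IsDensityMatrix ρ)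
    (E : Fin m → Matrix (Fin d) (Fin d) ℂ)
    (hE : ∀ i, IsMeasurementMatrix (E i))
    (hacc : ∀ i, 1 - ε ≤ ((E i * ρ).trace).re)
    (S : Fin m → Matrix (Fin d) (Fin d) ℂ)
    (hS : ∀ i, (S i).PosSemidef ∧ S i * S i = E i)
    (σ : ℕ → Matrix (Fin d) (Fin d) ℂ)
    (hσ0 : σ 0 = ρ)
    (hσ : ∀ u : Fin m, σ (u.1 + 1) = S u * σ u.1 * S u) :
    1 - ((σ m).trace).re ≤ m * Real.sqrt ε :=
  quantum_union_bound_general ε ρ hρ E hE hacc S hS σ hσ0 hσ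
end

section
/- Let C* be the class of functions of the form G(x,b) where for some F in a p-concept class C, G(x,0) = F(x)² and G(x,1) = (1-F(x))². Then for every η > 0, the η-fat-shattering dimension of C* is at most twice the (η/2)-fat-shattering dimension of C. -/
/-- A finite set `T` is `γ`-fat-shattered by the p-concept class `C`. -/
def FatShatters {S : Type*} (C : Set (S → ℝ)) (γ : ℝ) (T : Finset S) : Prop :=
  ∃ α : S → ℝ, ∀ B : Finset S, B ⊆ T → ∃ F ∈ C, ∀ s ∈ T,
    (s ∈ B → α s + γ ≤ F s) ∧ (s ∉ B → F s ≤ α s - γ)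

/-- The `γ`-fat-shattering dimension of a p-concept class. -/
noncomputable def fatDim {S : Type*} (C : Set (S → ℝ)) (γ : ℝ) : ℕ∞ :=
  sSup {k : ℕ∞ | ∃ T : Finset S, FatShatters C γ T ∧ (T.card : ℕ∞) = k}

private lemma gap_lemma {a η : ℝ} (hη : 0 < η) (h1 : η ≤ a) (h2 : a + η ≤ 1) :
    η ≤ Real.sqrt (a + η) - Real.sqrt (a - η) := by
  have ha := Real.sq_sqrt (by linarith : (0:ℝ) ≤ a + η)
  have hb := Real.sq_sqrt (by linarith : (0:ℝ) ≤ a - η)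
  have ha1 : Real.sqrt (a + η) ≤ 1 := Real.sqrt_le_one.mpr (by linarith)
  have hb1 : Real.sqrt (a - η) ≤ 1 := Real.sqrt_le_one.mpr (by linarith)
  have ha0 := Real.sqrt_nonneg (a + η)
  have hb0 := Real.sqrt_nonneg (a - η)
  nlinarith [ha, hb, ha1, hb1, ha0, hb0,
    mul_nonneg ha0 hb0, sq_nonneg (Real.sqrt (a+η) - Real.sqrt (a-η))]

/-- Let `C*` consist of the quadratic-loss functions `G(x,0) = F(x)²`,
`G(x,1) = (1-F(x))²` for `F ∈ C`.  Then `fat_{C*}(η) ≤ 2 · fat_C(η/2)`. -/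
theorem fatDim_quadratic_loss_le {S : Type*} (C : Set (S → ℝ))
    (hC : ∀ F ∈ C, ∀ x, F x ∈ Set.Icc (0 : ℝ) 1) (η : ℝ) (hη : 0 < η) :
    fatDim {G : S × Bool → ℝ | ∃ F ∈ C, ∀ x : S,
        G (x, false) = (F x) ^ 2 ∧ G (x, true) = (1 - F x) ^ 2} η
      ≤ 2 * fatDim C (η / 2) := by
  classical
  apply sSup_le
  rintro k ⟨T, ⟨α, hα⟩, rfl⟩
  set T' : Finset S := T.image Prod.fst with hT'
  set c : S → Bool := fun x => if (x, false) ∈ T then false else true with hc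
  have hmem : ∀ x ∈ T', (x, c x) ∈ T := by
    intro x hx
    rw [hT', Finset.mem_image] at hx
    obtain ⟨⟨y, b⟩, hp, rfl⟩ := hx
    by_cases hf : (y, false) ∈ T
    · simp [hc, hf]
    · cases b with
      | false => exact absurd hp hf
      | true => simpa [hc, hf] using hp
  -- bounds on α at points of T
  have hbound : ∀ p ∈ T, η ≤ α p ∧ α p + η ≤ 1 := by
    intro p hp
    obtain ⟨G0, hG0C, hG0⟩ := hα ∅ (Finset.empty_subset T)
    obtain ⟨G1, hG1C, hG1⟩ := hα T le_rfl
    obtain ⟨F0, hF0C, hF0⟩ := hG0C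
    obtain ⟨F1, hF1C, hF1⟩ := hG1C
    have h0 := (hG0 p hp).2 (Finset.notMem_empty p)
    have h1 := (hG1 p hp).1 hp
    obtain ⟨x, b⟩ := p
    constructor
    · have : 0 ≤ G0 (x, b) := by
        cases b
        · rw [(hF0 x).1]; positivity
        · rw [(hF0 x).2]; positivity
      linarith
    · have : G1 (x, b) ≤ 1 := by
        have hx := hC F1 hF1C x
        cases b
        · rw [(hF1 x).1]; nlinarith [hx.1, hx.2]
        · rw [(hF1 x).2]; nlinarith [hx.1, hx.2]
      linarith
  have hshat : FatShatters C (η / 2) T' := by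
    refine ⟨fun x =>
        if c x = false then
          (Real.sqrt (α (x, false) + η) + Real.sqrt (α (x, false) - η)) / 2
        else 1 - (Real.sqrt (α (x, true) + η) + Real.sqrt (α (x, true) - η)) / 2,
      fun B _ => ?_⟩
    obtain ⟨G, hGC, hG⟩ := hα
      (T.filter (fun p => if p.2 then p.1 ∉ B else p.1 ∈ B)) (Finset.filter_subset _ _)
    obtain ⟨F, hFC, hF⟩ := hGC
    refine ⟨F, hFC, fun x hx => ?_⟩
    have hxT := hmem x hx
    have hFx := hC F hFC x
    constructor
    · intro hxB
      cases hcx : c x with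
      | false =>
        rw [hcx] at hxT
        have hb := hbound _ hxT
        have hmemB : (x, false) ∈ T.filter (fun p => if p.2 then p.1 ∉ B else p.1 ∈ B) :=
          Finset.mem_filter.mpr ⟨hxT, by simpa using hxB⟩
        have hge := (hG _ hxT).1 hmemB
        rw [(hF x).1] at hge
        have hs : Real.sqrt (α (x, false) + η) ≤ F x := by
          calc Real.sqrt (α (x, false) + η) ≤ Real.sqrt (F x ^ 2) := Real.sqrt_le_sqrt hge
            _ = F x := Real.sqrt_sq hFx.1
        have hgap := gap_lemma hη hb.1 hb.2
        simp only [hcx]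
        norm_num
        linarith
      | true =>
        rw [hcx] at hxT
        have hb := hbound _ hxT
        have hnot : (x, true) ∉ T.filter (fun p => if p.2 then p.1 ∉ B else p.1 ∈ B) := by
          simp [hxB]
        have hle := (hG _ hxT).2 hnot
        rw [(hF x).2] at hle
        have hs : 1 - F x ≤ Real.sqrt (α (x, true) - η) := by
          calc 1 - F x = Real.sqrt ((1 - F x) ^ 2) := (Real.sqrt_sq (by linarith [hFx.2])).symm
            _ ≤ Real.sqrt (α (x, true) - η) := Real.sqrt_le_sqrt hle
        have hgap := gap_lemma hη hb.1 hb.2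
        simp only [hcx]
        norm_num
        linarith
    · intro hxB
      cases hcx : c x with
      | false =>
        rw [hcx] at hxT
        have hb := hbound _ hxT
        have hnot : (x, false) ∉ T.filter (fun p => if p.2 then p.1 ∉ B else p.1 ∈ B) := by
          simp [hxB]
        have hle := (hG _ hxT).2 hnot
        rw [(hF x).1] at hle
        have hs : F x ≤ Real.sqrt (α (x, false) - η) := by
          calc F x = Real.sqrt (F x ^ 2) := (Real.sqrt_sq hFx.1).symm
            _ ≤ Real.sqrt (α (x, false) - η) := Real.sqrt_le_sqrt hle
        have hgap := gap_lemma hη hb.1 hb.2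
        simp only [hcx]
        norm_num
        linarith
      | true =>
        rw [hcx] at hxT
        have hb := hbound _ hxT
        have hmemB : (x, true) ∈ T.filter (fun p => if p.2 then p.1 ∉ B else p.1 ∈ B) :=
          Finset.mem_filter.mpr ⟨hxT, by simpa using hxB⟩
        have hge := (hG _ hxT).1 hmemB
        rw [(hF x).2] at hge
        have hs : Real.sqrt (α (x, true) + η) ≤ 1 - F x := by
          calc Real.sqrt (α (x, true) + η) ≤ Real.sqrt ((1 - F x) ^ 2) :=
                Real.sqrt_le_sqrt hge
            _ = 1 - F x := Real.sqrt_sq (by linarith [hFx.2])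
        have hgap := gap_lemma hη hb.1 hb.2
        simp only [hcx]
        norm_num
        linarith
  have hcard : T.card ≤ 2 * T'.card := by
    apply Finset.card_le_mul_card_image
    intro a _
    have hsub : T.filter (fun x => x.1 = a) ⊆ {(a, false), (a, true)} := by
      rintro ⟨y, b⟩ hy
      rw [Finset.mem_filter] at hy
      obtain ⟨-, rfl⟩ := hy
      cases b <;> simp
    calc (T.filter (fun x => x.1 = a)).card ≤ ({(a, false), (a, true)} : Finset (S × Bool)).card :=
          Finset.card_le_card hsub
      _ ≤ 2 := Finset.card_insert_le _ _ |>.trans (by simp)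
  calc (T.card : ℕ∞) ≤ ((2 * T'.card : ℕ) : ℕ∞) := by exact_mod_cast hcard
    _ = 2 * (T'.card : ℕ∞) := by push_cast; ring
    _ ≤ 2 * fatDim C (η / 2) := by
        have h : (T'.card : ℕ∞) ≤ fatDim C (η / 2) := by
          unfold fatDim
          exact le_sSup ⟨T', hshat, rfl⟩
        exact mul_le_mul_right h 2
end

section
/- In Lemma 'Witness Protection': consider a randomized procedure that, starting from state ρ₀, picks t uniformly from {1,…,T} and applies t measurements, each chosen uniformly from {E₁,…,E_m}, halting with failure if any rejects. Let p_t be the probability that all t iterations succeed, and β_u = max_i (1 - Tr(E_i ρ_u)) where ρ_u is the state after u successful iterations. Then p_t ≤ ∏_{u<t} (1 - β_u/m), and consequently for any z > 0, Σ_{t : β_t > z} p_t ≤ m/z. -/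
open Matrix
open scoped ComplexOrder

/-!
Cycling the trace, `p (t+1) = (1/m) ∑ᵢ Tr(Eᵢ σ_t)`. Every term is at most `p t`, and the term
of the measurement attaining `β t` equals `(1 - β t) p t`, so `p (t+1) ≤ (1 - β t / m) p t`;
this iterates to the product bound. For the sum, write `a u = β u / m` and
`P t = ∏_{u<t} (1 - a u)`. Then `P t - P (t+1) = a t P t` telescopes to `∑_{t<N} a t P t ≤ 1`,
while `a t > z / m` on `A`.
-/

namespace Matrix

variable {n : Type*} [Fintype n]

lemma PosSemidef.trace_eq_re {A : Matrix n n ℂ} (hA : A.PosSemidef) :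
    A.trace = (A.trace.re : ℂ) :=
  Complex.eq_re_of_ofReal_le (by rw [Complex.ofReal_zero]; exact hA.trace_nonneg)

open scoped MatrixOrder in
lemma PosSemidef.trace_mul_nonneg [DecidableEq n] {A B : Matrix n n ℂ} (hA : A.PosSemidef)
    (hB : B.PosSemidef) : 0 ≤ (A * B).trace := by
  have hB' : 0 ≤ B := nonneg_iff_posSemidef.mpr hB
  have hsqrt : (CFC.sqrt B).IsHermitian :=
    (nonneg_iff_posSemidef.mp (CFC.sqrt_nonneg B)).isHermitian
  rw [← CFC.sqrt_mul_sqrt_self B hB', ← mul_assoc, trace_mul_cycle]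
  simpa only [hsqrt.eq] using (hA.mul_mul_conjTranspose_same (CFC.sqrt B)).trace_nonneg

lemma PosSemidef.re_trace_mul_nonneg [DecidableEq n] {A B : Matrix n n ℂ} (hA : A.PosSemidef)
    (hB : B.PosSemidef) : 0 ≤ (A * B).trace.re :=
  (Complex.nonneg_iff.mp (hA.trace_mul_nonneg hB)).1

lemma PosSemidef.re_trace_mul_le [DecidableEq n] {E σ : Matrix n n ℂ} (hE : (1 - E).PosSemidef)
    (hσ : σ.PosSemidef) : (E * σ).trace.re ≤ σ.trace.re := by
  have h := hE.re_trace_mul_nonneg hσ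
  rw [sub_mul, one_mul, trace_sub, Complex.sub_re] at h
  linarith

lemma PosSemidef.re_trace_mul_normalize (E : Matrix n n ℂ) {σ : Matrix n n ℂ}
    (hσ : σ.PosSemidef) :
    (E * (σ.trace⁻¹ • σ)).trace.re = σ.trace.re⁻¹ * (E * σ).trace.re := by
  rw [Matrix.mul_smul, trace_smul, hσ.trace_eq_re, smul_eq_mul, ← Complex.ofReal_inv,
    Complex.re_ofReal_mul, Complex.ofReal_re]

lemma PosSemidef.inv_natCast_smul_sum_conj {ι : Type*} [Fintype ι] {σ : Matrix n n ℂ}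
    (hσ : σ.PosSemidef) (S : ι → Matrix n n ℂ) (hS : ∀ i, (S i).IsHermitian) (k : ℕ) :
    ((k : ℂ)⁻¹ • ∑ i, S i * σ * S i).PosSemidef := by
  refine (posSemidef_sum _ fun i _ => ?_).smul (inv_nonneg.mpr (Nat.cast_nonneg k))
  simpa only [(hS i).eq] using hσ.mul_mul_conjTranspose_same (S i)

lemma re_trace_inv_natCast_smul_sum_conj {ι : Type*} [Fintype ι] (σ : Matrix n n ℂ)
    {S E : ι → Matrix n n ℂ} (hSE : ∀ i, S i * S i = E i) (k : ℕ) :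
    ((k : ℂ)⁻¹ • ∑ i, S i * σ * S i).trace.re =
      (k : ℝ)⁻¹ * ∑ i, (E i * σ).trace.re := by
  rw [trace_smul, trace_sum, smul_eq_mul, ← Complex.ofReal_natCast, ← Complex.ofReal_inv,
    Complex.re_ofReal_mul, Complex.re_sum]
  simp only [trace_mul_cycle _ σ, hSE]

end Matrix

section Averaging

variable {ι : Type*} {x : ι → ℝ} {p b : ℝ}

lemma inv_mul_le_one_of_forall_le (hx0 : ∀ i, 0 ≤ x i) (hxp : ∀ i, x i ≤ p) (i : ι) :
    p⁻¹ * x i ≤ 1 := by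
  rcases (hx0 i).trans (hxp i) |>.eq_or_lt with hp | hp
  · simp [← hp]
  · exact inv_mul_le_one_of_le₀ (hxp i) hp.le

lemma mem_Icc_of_isGreatest (hx0 : ∀ i, 0 ≤ x i) (hxp : ∀ i, x i ≤ p) [Nonempty ι]
    (hb : IsGreatest {y | ∃ i, y = 1 - p⁻¹ * x i} b) : b ∈ Set.Icc 0 1 := by
  obtain ⟨⟨i, rfl⟩, hub⟩ := hb
  obtain ⟨j⟩ := ‹Nonempty ι›
  have hj := hub ⟨j, rfl⟩
  have hj_le := inv_mul_le_one_of_forall_le hx0 hxp j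
  have hi_nonneg := mul_nonneg (inv_nonneg.mpr ((hx0 i).trans (hxp i))) (hx0 i)
  constructor <;> linarith

lemma inv_card_mul_sum_le [Fintype ι] (hx0 : ∀ i, 0 ≤ x i) (hxp : ∀ i, x i ≤ p)
    (hb : ∃ i, b = 1 - p⁻¹ * x i) :
    (Fintype.card ι : ℝ)⁻¹ * ∑ i, x i ≤ (1 - b / Fintype.card ι) * p := by
  obtain ⟨i₀, rfl⟩ := hb
  have hcard : (0 : ℝ) < Fintype.card ι := by exact_mod_cast Fintype.card_pos_iff.mpr ⟨i₀⟩
  have hloss : p - x i₀ ≤ ∑ i, (p - x i) :=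
    Finset.single_le_sum (f := fun i => p - x i) (fun i _ => by linarith [hxp i])
      (Finset.mem_univ i₀)
  have hx : p⁻¹ * x i₀ * p = x i₀ := by
    rcases (hx0 i₀).trans (hxp i₀) |>.eq_or_lt with hp | hp
    · simp [le_antisymm (hp ▸ hxp i₀) (hx0 i₀)]
    · field_simp
  rw [Finset.sum_sub_distrib, Finset.sum_const, Finset.card_univ, nsmul_eq_mul] at hloss
  rw [inv_mul_le_iff₀ hcard]
  calc ∑ i, x i ≤ Fintype.card ι * p - p + x i₀ := by linarith
    _ = (Fintype.card ι - (1 - p⁻¹ * x i₀)) * p := by linear_combination -hx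
    _ = Fintype.card ι * ((1 - (1 - p⁻¹ * x i₀) / Fintype.card ι) * p) := by field_simp

end Averaging

section Telescoping

variable {a : ℕ → ℝ}

lemma le_prod_range_of_succ_le_mul {f p : ℕ → ℝ} (h0 : p 0 ≤ 1) (hf : ∀ t, 0 ≤ f t)
    (hstep : ∀ t, p (t + 1) ≤ f t * p t) (t : ℕ) : p t ≤ ∏ u ∈ Finset.range t, f u := by
  induction t with
  | zero => simpa using h0
  | succ t ih =>
    rw [Finset.prod_range_succ, mul_comm]
    exact (hstep t).trans (mul_le_mul_of_nonneg_left ih (hf t))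

lemma sum_range_mul_prod_one_sub (N : ℕ) :
    ∑ t ∈ Finset.range N, a t * ∏ u ∈ Finset.range t, (1 - a u) =
      1 - ∏ u ∈ Finset.range N, (1 - a u) := by
  induction N with
  | zero => simp
  | succ N ih =>
    rw [Finset.sum_range_succ, ih, Finset.prod_range_succ]
    ring

lemma sum_prod_range_one_sub_le_inv (ha0 : ∀ u, 0 ≤ a u) (ha1 : ∀ u, a u ≤ 1) {c : ℝ}
    (hc : 0 < c) (A : Finset ℕ) (hA : ∀ t ∈ A, c ≤ a t) :
    ∑ t ∈ A, ∏ u ∈ Finset.range t, (1 - a u) ≤ c⁻¹ := by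
  set P : ℕ → ℝ := fun t => ∏ u ∈ Finset.range t, (1 - a u)
  have hP : ∀ t, 0 ≤ P t := fun t => Finset.prod_nonneg fun u _ => sub_nonneg.mpr (ha1 u)
  set N := (A.sup id).succ
  calc ∑ t ∈ A, P t ≤ ∑ t ∈ A, c⁻¹ * (a t * P t) := by
        refine Finset.sum_le_sum fun t ht => ?_
        rw [← mul_assoc]
        exact le_mul_of_one_le_left (hP t) ((one_le_inv_mul₀ hc).mpr (hA t ht))
    _ ≤ c⁻¹ * ∑ t ∈ Finset.range N, a t * P t := by
        rw [← Finset.mul_sum]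
        gcongr
        · exact fun t _ _ => mul_nonneg (ha0 t) (hP t)
        · exact A.subset_range_sup_succ
    _ = c⁻¹ * (1 - P N) := by rw [sum_range_mul_prod_one_sub]
    _ ≤ c⁻¹ := mul_le_of_le_one_right (inv_nonneg.mpr hc.le) (by linarith [hP N])

end Telescoping

/-- Witness Protection Lemma, combinatorial core.  A procedure starts from the
density matrix `ρ₀` and at each step applies a measurement chosen uniformly
from `E₁, …, E_m`, halting on rejection.  With `Sᵢ = √Eᵢ`, the unnormalized
state after `t` successful iterations (averaged over the measurement choices)
is `σ t`, with `σ 0 = ρ₀` and `σ (t+1) = (1/m) Σᵢ Sᵢ (σ t) Sᵢ`; the success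
probability of `t` iterations is `p t = Tr(σ t)` and
`β t = maxᵢ (1 - Tr(Eᵢ ρ_t))` with `ρ_t = σ t / Tr(σ t)`.  Then
`p t ≤ ∏_{u<t} (1 - β u / m)` and, for every `z > 0`,
`Σ_{t : β t > z} p t ≤ m / z`. -/
theorem witness_protection_sum_bound {d m : ℕ} (hm : 0 < m)
    (ρ₀ : Matrix (Fin d) (Fin d) ℂ)
    (hρ₀ : ρ₀.PosSemidef ∧ ρ₀.trace = 1)
    (E S : Fin m → Matrix (Fin d) (Fin d) ℂ)
    (hE : ∀ i, (E i).PosSemidef ∧ (1 - E i).PosSemidef)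
    (hS : ∀ i, (S i).PosSemidef ∧ S i * S i = E i)
    (σ : ℕ → Matrix (Fin d) (Fin d) ℂ)
    (hσ0 : σ 0 = ρ₀)
    (hσ : ∀ t, σ (t + 1) = (m : ℂ)⁻¹ • ∑ i, S i * σ t * S i)
    (p β : ℕ → ℝ)
    (hp : ∀ t, p t = ((σ t).trace).re)
    (hβ : ∀ t, IsGreatest
      {x : ℝ | ∃ i : Fin m,
        x = 1 - ((E i * (((σ t).trace)⁻¹ • σ t)).trace).re} (β t)) :
    (∀ t, p t ≤ ∏ u ∈ Finset.range t, (1 - β u / m)) ∧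
    (∀ z : ℝ, 0 < z → ∀ A : Finset ℕ, (∀ t ∈ A, z < β t) →
      ∑ t ∈ A, p t ≤ m / z) := by
  have hpsd : ∀ t, (σ t).PosSemidef := fun t => by
    induction t with
    | zero => exact hσ0 ▸ hρ₀.1
    | succ t ih =>
      exact hσ t ▸ ih.inv_natCast_smul_sum_conj S (fun i => (hS i).1.isHermitian) m
  set x : ℕ → Fin m → ℝ := fun t i => ((E i * σ t).trace).re
  have hx0 : ∀ t i, 0 ≤ x t i := fun t i => (hE i).1.re_trace_mul_nonneg (hpsd t)
  have hxp : ∀ t i, x t i ≤ p t := fun t i => hp t ▸ (hE i).2.re_trace_mul_le (hpsd t)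
  have hβx : ∀ t, IsGreatest {y | ∃ i, y = 1 - (p t)⁻¹ * x t i} (β t) := fun t => by
    simpa only [(hpsd t).re_trace_mul_normalize, ← hp] using hβ t
  have hβ01 : ∀ t, β t ∈ Set.Icc 0 1 := fun t =>
    have : Nonempty (Fin m) := ⟨⟨0, hm⟩⟩
    mem_Icc_of_isGreatest (hx0 t) (hxp t) (hβx t)
  have hm_one : (1 : ℝ) ≤ m := by exact_mod_cast hm
  have ha0 : ∀ u, 0 ≤ β u / m := fun u => div_nonneg (hβ01 u).1 (by positivity)
  have ha1 : ∀ u, β u / m ≤ 1 := fun u =>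
    div_le_one_of_le₀ ((hβ01 u).2.trans hm_one) (by positivity)
  have hstep : ∀ t, p (t + 1) ≤ (1 - β t / m) * p t := fun t => by
    rw [hp, hσ, re_trace_inv_natCast_smul_sum_conj _ fun i => (hS i).2]
    simpa only [Fintype.card_fin] using inv_card_mul_sum_le (hx0 t) (hxp t) (hβx t).1
  have hprod := le_prod_range_of_succ_le_mul (by simp [hp, hσ0, hρ₀.2])
    (fun t => sub_nonneg.mpr (ha1 t)) hstep
  refine ⟨hprod, fun z hz A hA => ?_⟩
  calc ∑ t ∈ A, p t ≤ ∑ t ∈ A, ∏ u ∈ Finset.range t, (1 - β u / m) :=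
        Finset.sum_le_sum fun t _ => hprod t
    _ ≤ (z / m)⁻¹ := sum_prod_range_one_sub_le_inv ha0 ha1 (by positivity) A
        fun t ht => div_le_div_of_nonneg_right (hA t ht).le (by positivity)
    _ = m / z := inv_div _ _
end

section
/- In the Witness Protection Lemma, if the procedure succeeds with probability at least λ, then the output state σ (the average of ρ_t weighted by p_t over the random stopping time t uniform in {1,…,T}) satisfies Tr(E_i σ) ≥ 1 - 2√(m/(λT)) for every i, where the optimal choice z = √(m/(λT)) minimizes the bound z + (m/z)/(λT). -/
/-- Witness Protection Lemma, averaging part.  Here `p t` is the probability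
of completing `t` iterations, `q i t = 1 - Tr(Eᵢ ρ_t)` for the conditional
state `ρ_t`, and `β t = maxᵢ q i t`, so that
`1 - Tr(Eᵢ σ) = (Σₜ p t · q i t)/(Σₜ p t)` for the output state
`σ = Σₜ p t · ρ_t / Σₜ p t` (with `t` uniform in `{1,…,T}`).  If the success
probability `(1/T) Σₜ p t` is at least `λ` and `Σ_{t : β t > z} p t ≤ m/z`
for all `z > 0`, then `1 - Tr(Eᵢ σ) ≤ z + (m/z)/(λT)` for all `z > 0`, and
the optimal choice `z = √(m/(λT))` gives `Tr(Eᵢ σ) ≥ 1 - 2√(m/(λT))`. -/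
theorem witness_protection_output {I : Type*} (T : ℕ) (hT : 0 < T)
    (m lam : ℝ) (hm : 0 < m) (hlam : 0 < lam)
    (p β : ℕ → ℝ) (q : I → ℕ → ℝ)
    (hp : ∀ t, 0 ≤ p t)
    (hq : ∀ i t, 0 ≤ q i t ∧ q i t ≤ β t)
    (hβ : ∀ t, β t ≤ 1)
    (hsucc : lam ≤ (1 / T) * ∑ t ∈ Finset.Icc 1 T, p t)
    (hsum : ∀ z : ℝ, 0 < z →
      ∑ t ∈ (Finset.Icc 1 T).filter (fun t => z < β t), p t ≤ m / z) :
    (∀ i : I, ∀ z : ℝ, 0 < z →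
      (∑ t ∈ Finset.Icc 1 T, p t * q i t) / (∑ t ∈ Finset.Icc 1 T, p t)
        ≤ z + (m / z) / (lam * T)) ∧
    (∀ i : I,
      1 - 2 * Real.sqrt (m / (lam * T)) ≤
        1 - (∑ t ∈ Finset.Icc 1 T, p t * q i t) /
              (∑ t ∈ Finset.Icc 1 T, p t)) := by

  have hT' : (0:ℝ) < T := by exact_mod_cast hT
  have hlamT : 0 < lam * T := mul_pos hlam hT'
  have hS : lam * T ≤ ∑ t ∈ Finset.Icc 1 T, p t := by
    rw [one_div, inv_mul_eq_div, le_div_iff₀ hT'] at hsucc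
    exact hsucc
  have hSpos : 0 < ∑ t ∈ Finset.Icc 1 T, p t := lt_of_lt_of_le hlamT hS
  have main : ∀ i : I, ∀ z : ℝ, 0 < z →
      (∑ t ∈ Finset.Icc 1 T, p t * q i t) / (∑ t ∈ Finset.Icc 1 T, p t)
        ≤ z + (m / z) / (lam * T) := by
    intro i z hz
    have hnum : ∑ t ∈ Finset.Icc 1 T, p t * q i t
        ≤ z * (∑ t ∈ Finset.Icc 1 T, p t) + m / z := by
      rw [← Finset.sum_filter_add_sum_filter_not (Finset.Icc 1 T) (fun t => z < β t)
        (fun t => p t * q i t)]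
      have h1 : ∑ t ∈ (Finset.Icc 1 T).filter (fun t => z < β t), p t * q i t ≤ m / z := by
        refine le_trans (Finset.sum_le_sum fun t ht => ?_) (hsum z hz)
        calc p t * q i t ≤ p t * 1 := by
              exact mul_le_mul_of_nonneg_left (le_trans (hq i t).2 (hβ t)) (hp t)
          _ = p t := mul_one _
      have h2 : ∑ t ∈ (Finset.Icc 1 T).filter (fun t => ¬ z < β t), p t * q i t
          ≤ z * (∑ t ∈ Finset.Icc 1 T, p t) := by
        calc ∑ t ∈ (Finset.Icc 1 T).filter (fun t => ¬ z < β t), p t * q i t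
            ≤ ∑ t ∈ (Finset.Icc 1 T).filter (fun t => ¬ z < β t), p t * z := by
              refine Finset.sum_le_sum fun t ht => ?_
              have hβz : β t ≤ z := not_lt.mp (Finset.mem_filter.mp ht).2
              exact mul_le_mul_of_nonneg_left (le_trans (hq i t).2 hβz) (hp t)
          _ = z * ∑ t ∈ (Finset.Icc 1 T).filter (fun t => ¬ z < β t), p t := by
              rw [Finset.mul_sum]; exact Finset.sum_congr rfl fun t _ => mul_comm _ _
          _ ≤ z * ∑ t ∈ Finset.Icc 1 T, p t := by
              refine mul_le_mul_of_nonneg_left ?_ hz.le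
              exact Finset.sum_le_sum_of_subset_of_nonneg (Finset.filter_subset _ _)
                (fun t _ _ => hp t)
      linarith
    rw [div_le_iff₀ hSpos]
    have hmz : 0 ≤ m / z := div_nonneg hm.le hz.le
    have h3 : (m / z) / (∑ t ∈ Finset.Icc 1 T, p t) ≤ (m / z) / (lam * T) :=
      div_le_div_of_nonneg_left hmz hlamT hS
    have h4 : m / z = ((m / z) / (∑ t ∈ Finset.Icc 1 T, p t)) * (∑ t ∈ Finset.Icc 1 T, p t) := by
      field_simp
    nlinarith [mul_le_mul_of_nonneg_right h3 hSpos.le]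
  refine ⟨main, fun i => ?_⟩
  set z := Real.sqrt (m / (lam * T)) with hzdef
  have hz : 0 < z := Real.sqrt_pos.mpr (div_pos hm hlamT)
  have hsq : z * z = m / (lam * T) := Real.mul_self_sqrt (div_pos hm hlamT).le
  have hkey : (m / z) / (lam * T) = z := by
    have h5 : z * z * (lam * T) = m := by
      rw [hsq]; field_simp
    field_simp
    linarith [h5]
  have := main i z hz
  rw [hkey] at this
  linarith
end
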